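/- arXiv:1703.01716 — 2 statements merged into one kernel-verified Lean document; each statement's English description precedes it below -/
import Mathlib

section
/- Let f : ℝ → ℝ be a continuous involution with exactly one fixed point e. Then { x ∈ ℝ : x > f(x) } = (e, ∞) and { x ∈ ℝ : x < f(x) } = (−∞, e). -/
/-! Between `x` and `f x` the continuous maps `f` and `id` swap their order, because `f` exchanges
the two points; by the intermediate value theorem `f` has a fixed point in `[[x, f x]]`. If that
fixed point is always `e`, then `e` lies between `x` and `f x` for every `x`, which decides on
which side of `x` the point `f x` lies. -/

open Set Function

theorem Function.Involutive.exists_isFixedPt_mem_uIcc {α : Type*}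
    [ConditionallyCompleteLinearOrder α] [TopologicalSpace α] [OrderTopology α]
    [DenselyOrdered α] {f : α → α} (hf : Continuous f) (hinv : Involutive f) (x : α) : ∃ c ∈ uIcc x (f x), IsFixedPt f c := by
  have hs : IsPreconnected (uIcc x (f x)) := isPreconnected_uIcc
  rcases le_total (f x) x with h | h
  · exact hs.intermediate_value₂ left_mem_uIcc right_mem_uIcc hf.continuousOn
      continuousOn_id h (by rwa [hinv x])
  · obtain ⟨c, hc, hfc⟩ := hs.intermediate_value₂ left_mem_uIcc right_mem_uIcc
      continuousOn_id hf.continuousOn h (by rwa [id_eq, hinv x])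
    exact ⟨c, hc, hfc.symm⟩

theorem Function.Involutive.mem_uIcc_of_isFixedPt_unique {α : Type*}
    [ConditionallyCompleteLinearOrder α] [TopologicalSpace α] [OrderTopology α]
    [DenselyOrdered α] {f : α → α} (hf : Continuous f) (hinv : Involutive f) {e : α}
    (huniq : ∀ x, IsFixedPt f x → x = e) (x : α) : e ∈ uIcc x (f x) := by
  obtain ⟨c, hc, hfc⟩ := hinv.exists_isFixedPt_mem_uIcc hf x
  rwa [← huniq c hfc]

section LinearOrder

variable {α : Type*} [LinearOrder α] {f : α → α} {e x : α}

theorem apply_lt_self_iff_of_mem_uIcc (hx : e ∈ uIcc x (f x)) (he : IsFixedPt f e) :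
    f x < x ↔ e < x := by
  constructor
  · intro h
    refine lt_of_le_of_ne ?_ (by rintro rfl; exact h.ne he)
    rcases mem_uIcc.1 hx with ⟨h₁, h₂⟩ | ⟨-, h₂⟩
    exacts [absurd (h₁.trans h₂) (not_le.2 h), h₂]
  · intro h
    rcases mem_uIcc.1 hx with ⟨h₁, -⟩ | ⟨h₁, -⟩
    exacts [absurd h₁ (not_le.2 h), h₁.trans_lt h]

theorem lt_apply_self_iff_of_mem_uIcc (hx : e ∈ uIcc x (f x)) (he : IsFixedPt f e) :
    x < f x ↔ x < e := by
  constructor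
  · intro h
    refine lt_of_le_of_ne ?_ (by rintro rfl; exact h.ne' he)
    rcases mem_uIcc.1 hx with ⟨h₁, -⟩ | ⟨h₁, h₂⟩
    exacts [h₁, absurd (h₁.trans h₂) (not_le.2 h)]
  · intro h
    rcases mem_uIcc.1 hx with ⟨-, h₂⟩ | ⟨-, h₂⟩
    exacts [h.trans_le h₂, absurd h₂ (not_le.2 h)]

end LinearOrder

/-- for a continuous involution of `ℝ` with exactly one fixed point
`e`, the set `{x | x > f x}` is `(e, ∞)` and `{x | x < f x}` is `(-∞, e)`. -/
theorem stmt_14 (f : ℝ → ℝ) (hf : Continuous f) (hinv : ∀ x, f (f x) = x)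
    (e : ℝ) (he : f e = e) (huniq : ∀ x, f x = x → x = e) :
    {x : ℝ | f x < x} = Set.Ioi e ∧ {x : ℝ | x < f x} = Set.Iio e := by
  have hmem : ∀ x, e ∈ uIcc x (f x) := Involutive.mem_uIcc_of_isFixedPt_unique hf hinv huniq
  exact ⟨Set.ext fun x => apply_lt_self_iff_of_mem_uIcc (hmem x) he,
    Set.ext fun x => lt_apply_self_iff_of_mem_uIcc (hmem x) he⟩
end

section
/- Let G be a subgroup of ℝ, f : G → G a continuous involution with unique fixed point e, A = { a ∈ G : a > f(a) }, and suppose h : A ∪ {e} → G ∩ [0, ∞) is a homeomorphism with h(e) = 0. Define h̃ : G → G by h̃(x) = h(x) for x ∈ A ∪ {e} and h̃(x) = −h(f(x)) for x ∈ f(A). Then h̃ is a homeomorphism of G onto itself. -/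
/-!
`S = A ∪ {e} = {x | f x ≤ x}` is closed, `S` and `f⁻¹(S)` cover `G` and meet only in the fixed
point `e`; likewise `[0, ∞)` and its negative cover `G` and meet only in `0 = h e`. Hence `h̃` is
continuous by pasting along two closed sets, and the same reflection construction applied to
`h⁻¹`, with the roles of `f` and negation exchanged, is a continuous inverse.
-/

open Function Set

section ReflectExtend

variable {X Y : Type*} {σ : X → X} {τ : Y → Y} {S : Set X} {P : Set Y} {φ : X → Y} {ψ : Y → X}

open Classical in
/-- For `σ = f`, `τ = Neg.neg`, `S = A ∪ {e}` and `φ` extending `h`, this is the paper's `h̃`. -/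
noncomputable def reflectExtend (σ : X → X) (τ : Y → Y) (S : Set X) (φ : X → Y) : X → Y :=
  fun x => if x ∈ S then φ x else τ (φ (σ x))

lemma reflectExtend_of_mem {x : X} (hx : x ∈ S) : reflectExtend σ τ S φ x = φ x :=
  if_pos hx

lemma reflectExtend_of_notMem {x : X} (hx : x ∉ S) :
    reflectExtend σ τ S φ x = τ (φ (σ x)) :=
  if_neg hx

lemma eqOn_reflectExtend_preimage (hbdry : ∀ x ∈ S, σ x ∈ S → τ (φ (σ x)) = φ x) :
    EqOn (reflectExtend σ τ S φ) (τ ∘ φ ∘ σ) (σ ⁻¹' S) := by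
  intro x hσx
  by_cases hx : x ∈ S
  · rw [reflectExtend_of_mem hx, comp_apply, comp_apply, hbdry x hx hσx]
  · exact reflectExtend_of_notMem hx

lemma leftInverse_reflectExtend (hσ : Involutive σ) (hτ : Involutive τ)
    (hcover : ∀ x, x ∈ S ∨ σ x ∈ S) (hmaps : MapsTo φ S P) (hinv : LeftInvOn ψ φ S)
    (hbdry : ∀ y ∈ P, τ y ∈ P → σ (ψ (τ y)) = ψ y) :
    LeftInverse (reflectExtend τ σ P ψ) (reflectExtend σ τ S φ) := by
  intro x
  by_cases hx : x ∈ S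
  · rw [reflectExtend_of_mem hx, reflectExtend_of_mem (hmaps hx), hinv hx]
  have hσx : σ x ∈ S := (hcover x).resolve_left hx
  rw [reflectExtend_of_notMem hx]
  by_cases hy : τ (φ (σ x)) ∈ P
  · -- `hbdry` at `φ (σ x)` gives `ψ (τ (φ (σ x))) = σ (σ x) = x`
    have hfix := hbdry _ (hmaps hσx) hy
    rw [hinv hσx] at hfix
    rw [reflectExtend_of_mem hy, ← hσ (ψ _), hfix, hσ]
  · rw [reflectExtend_of_notMem hy, hτ, hinv hσx, hσ]

variable [TopologicalSpace X] [TopologicalSpace Y]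

lemma continuous_reflectExtend (hσ : Continuous σ) (hτ : Continuous τ) (hS : IsClosed S)
    (hcover : ∀ x, x ∈ S ∨ σ x ∈ S) (hbdry : ∀ x ∈ S, σ x ∈ S → τ (φ (σ x)) = φ x)
    (hφ : ContinuousOn φ S) : Continuous (reflectExtend σ τ S φ) := by
  have hcontS : ContinuousOn (reflectExtend σ τ S φ) S :=
    hφ.congr fun _ hx => reflectExtend_of_mem hx
  have hσS : ContinuousOn (reflectExtend σ τ S φ) (σ ⁻¹' S) :=
    (hτ.comp_continuousOn (hφ.comp hσ.continuousOn (mapsTo_preimage σ S))).congr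
      (eqOn_reflectExtend_preimage hbdry)
  have hunion : S ∪ σ ⁻¹' S = univ := eq_univ_of_forall hcover
  rw [← continuousOn_univ, ← hunion]
  exact hcontS.union_of_isClosed hσS hS (hS.preimage hσ)

namespace Homeomorph

variable (h : S ≃ₜ P)

lemma apply_eq_of_domRestrict_eq (hφ : S.domRestrict φ = (↑) ∘ h) {x : X} (hx : x ∈ S) :
    φ x = h ⟨x, hx⟩ :=
  congrFun hφ ⟨x, hx⟩

lemma mapsTo_of_domRestrict_eq (hφ : S.domRestrict φ = (↑) ∘ h) : MapsTo φ S P := fun x hx => by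
  rw [h.apply_eq_of_domRestrict_eq hφ hx]
  exact (h ⟨x, hx⟩).2

lemma continuousOn_of_domRestrict_eq (hφ : S.domRestrict φ = (↑) ∘ h) : ContinuousOn φ S := by
  rw [continuousOn_iff_continuous_domRestrict, hφ]
  exact continuous_subtype_val.comp h.continuous

lemma leftInvOn_of_domRestrict_eq (hφ : S.domRestrict φ = (↑) ∘ h)
    (hψ : P.domRestrict ψ = (↑) ∘ h.symm) : LeftInvOn ψ φ S := fun x hx => by
  rw [h.apply_eq_of_domRestrict_eq hφ hx, h.symm.apply_eq_of_domRestrict_eq hψ (h ⟨x, hx⟩).2,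
    Subtype.coe_eta, symm_apply_apply]

end Homeomorph

theorem exists_homeomorph_coe_eq_reflectExtend (hσc : Continuous σ) (hσ : Involutive σ)
    (hτc : Continuous τ) (hτ : Involutive τ) (hS : IsClosed S) (hP : IsClosed P)
    (hSσ : ∀ x, x ∈ S ∨ σ x ∈ S) (hPτ : ∀ y, y ∈ P ∨ τ y ∈ P) (h : S ≃ₜ P)
    (hφ : S.domRestrict φ = (↑) ∘ h) (hψ : P.domRestrict ψ = (↑) ∘ h.symm)
    (hφb : ∀ x ∈ S, σ x ∈ S → τ (φ (σ x)) = φ x) (hψb : ∀ y ∈ P, τ y ∈ P → σ (ψ (τ y)) = ψ y) :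
    ∃ t : X ≃ₜ Y, ⇑t = reflectExtend σ τ S φ :=
  ⟨{ toFun := reflectExtend σ τ S φ
     invFun := reflectExtend τ σ P ψ
     left_inv := leftInverse_reflectExtend hσ hτ hSσ (h.mapsTo_of_domRestrict_eq hφ)
       (h.leftInvOn_of_domRestrict_eq hφ hψ) hψb
     right_inv := leftInverse_reflectExtend hτ hσ hPτ (h.symm.mapsTo_of_domRestrict_eq hψ)
       (h.symm.leftInvOn_of_domRestrict_eq hψ hφ) hφb
     continuous_toFun := continuous_reflectExtend hσc hτc hS hSσ hφb
       (h.continuousOn_of_domRestrict_eq hφ)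
     continuous_invFun := continuous_reflectExtend hτc hσc hP hPτ hψb
       (h.symm.continuousOn_of_domRestrict_eq hψ) }, rfl⟩

end ReflectExtend

section SubgroupOfReal

variable {G : AddSubgroup ℝ} {f : G → G} {e : G}

lemma union_singleton_eq_setOf_apply_le {A : Set G} (he : f e = e)
    (huniq : ∀ x, f x = x → x = e) (hA : A = {a : G | (f a : ℝ) < a}) :
    A ∪ {e} = {x : G | (f x : ℝ) ≤ x} := by
  subst hA
  ext x
  rw [mem_union, mem_singleton_iff, mem_ofPred_eq, mem_ofPred_eq, le_iff_lt_or_eq]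
  exact or_congr_right ⟨fun hx => hx ▸ congrArg _ he, fun hx => huniq x (Subtype.ext hx)⟩

lemma mem_or_apply_mem_setOf_apply_le (hinv : Involutive f) (x : G) :
    x ∈ {x : G | (f x : ℝ) ≤ x} ∨ f x ∈ {x : G | (f x : ℝ) ≤ x} := by
  simpa only [mem_ofPred_eq, hinv x] using le_total (f x : ℝ) x

lemma eq_of_mem_setOf_apply_le_of_apply_mem (hinv : Involutive f)
    (huniq : ∀ x, f x = x → x = e) {x : G} (hx : x ∈ {x : G | (f x : ℝ) ≤ x})
    (hfx : f x ∈ {x : G | (f x : ℝ) ≤ x}) : x = e := by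
  replace hfx : (f (f x) : ℝ) ≤ f x := hfx
  rw [hinv] at hfx
  exact huniq x (Subtype.ext (le_antisymm hx hfx))

end SubgroupOfReal

/-- gluing a homeomorphism `h : A ∪ {e} → G ∩ [0,∞)` (with `h e = 0`)
with `x ↦ -h(f x)` on `f(A)` yields a homeomorphism `h̃` of `G` onto itself. -/
theorem stmt_15 (G : AddSubgroup ℝ) (f : G → G) (hf : Continuous f)
    (hinv : ∀ x : G, f (f x) = x) (e : G) (he : f e = e)
    (huniq : ∀ x : G, f x = x → x = e)
    (A : Set G) (hA : A = {a : G | (f a : ℝ) < a})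
    (h : (A ∪ {e} : Set G) ≃ₜ {x : G | (0 : ℝ) ≤ x})
    (hhe : ∀ hem : e ∈ A ∪ {e}, ((h ⟨e, hem⟩ : {x : G | (0 : ℝ) ≤ x}) : G) = 0)
    (ht : G → G)
    (ht1 : ∀ x : G, ∀ hx : x ∈ A ∪ {e}, ht x = ((h ⟨x, hx⟩ : {x : G | (0 : ℝ) ≤ x}) : G))
    (ht2 : ∀ x : G, x ∈ f '' A → ∀ hfx : f x ∈ A ∪ {e},
      ht x = -((h ⟨f x, hfx⟩ : {x : G | (0 : ℝ) ≤ x}) : G)) :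
    ∃ t : G ≃ₜ G, ⇑t = ht := by
  have hS := union_singleton_eq_setOf_apply_le he huniq hA
  have hem : e ∈ A ∪ {e} := Or.inr rfl
  have hcover : ∀ x, x ∈ A ∪ {e} ∨ f x ∈ A ∪ {e} := hS ▸ mem_or_apply_mem_setOf_apply_le hinv
  have hbdry : ∀ x ∈ A ∪ {e}, f x ∈ A ∪ {e} → x = e := fun x hx hfx =>
    eq_of_mem_setOf_apply_le_of_apply_mem hinv huniq (hS ▸ hx) (hS ▸ hfx)
  -- any value off `[0, ∞)` would do in place of `e`
  set ψ : G → G := fun y => if hy : (0 : ℝ) ≤ y then h.symm ⟨y, hy⟩ else e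
  have hψe : ψ 0 = e := by
    have h0 : (0 : ℝ) ≤ ((0 : G) : ℝ) := (ZeroMemClass.coe_zero G).ge
    have hsymm : h.symm ⟨0, h0⟩ = ⟨e, hem⟩ := h.symm_apply_eq.mpr (Subtype.ext (hhe hem).symm)
    simp only [ψ, dif_pos h0, hsymm]
  have hext : reflectExtend f Neg.neg (A ∪ {e}) ht = ht := by
    funext x
    by_cases hx : x ∈ A ∪ {e}
    · exact reflectExtend_of_mem hx
    have hfx := (hcover x).resolve_left hx
    have hfxA : f x ∈ A := hfx.resolve_right fun hfxe =>
      hx (Or.inr ((hinv x).symm.trans ((congrArg f hfxe).trans he)))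
    rw [reflectExtend_of_notMem hx, ht2 x ⟨f x, hfxA, hinv x⟩ hfx, ht1 _ hfx]
  obtain ⟨t, hteq⟩ : ∃ t : G ≃ₜ G, ⇑t = reflectExtend f Neg.neg (A ∪ {e}) ht := by
    refine exists_homeomorph_coe_eq_reflectExtend (ψ := ψ) hf hinv continuous_neg neg_involutive
      (hS ▸ isClosed_le (continuous_subtype_val.comp hf) continuous_subtype_val)
      (isClosed_le continuous_const continuous_subtype_val) hcover
      (fun y => (le_total 0 (y : ℝ)).imp_right neg_nonneg.mpr) h
      (funext fun x => ht1 x x.2) (funext fun y => dif_pos y.2) ?_ ?_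
    · intro x hx hfx
      rw [hbdry x hx hfx, he, ht1 e hem, hhe, neg_zero]
    · intro y (hy : (0 : ℝ) ≤ y) (hy' : (0 : ℝ) ≤ -y)
      obtain rfl : y = 0 := Subtype.ext (le_antisymm (neg_nonneg.mp hy') hy)
      rw [neg_zero, hψe, he]
  exact ⟨t, hteq.trans hext⟩
end
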